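/- Let X = ℙ² with the radial foliation F through a point p, so K_X = -3H, K_F = -H, L_t = (3-2t)H. For a line D through p (which is F-invariant, so A_F(D) = 0, A_X(D) = 1), the S-invariant is S_{L_t}(D) = (1/(3-2t)²)·∫₀^{3-2t} (3-2t-x)² dx = (3-2t)/3, and the mixed beta invariant is β^{[t]}(D) = (1-t) - (3-2t)/3 = -t/3. In particular β^{[t]}(D) < 0 for all t ∈ (0,1), so (ℙ², F, t) is not t-K-semistable for any t > 0. -/

import Mathlib

/-- For the radial foliation on `ℙ²` and a line `D` through the center
(`A_X(D) = 1`, `A_F(D) = 0`), with `L_t = (3-2t)H`: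
`S_{L_t}(D) = (1/(3-2t)²)·∫₀^{3-2t}(3-2t-x)² dx = (3-2t)/3`, the mixed beta invariant
`β^{[t]}(D) = (1-t)·1 + t·0 - S_{L_t}(D) = -t/3 < 0` for `t ∈ (0,1)`. -/
theorem radial_foliation_unstable (t : ℝ) (ht0 : 0 < t) (ht1 : t < 1) :
    (1 / (3 - 2 * t) ^ 2) * ∫ x in (0 : ℝ)..(3 - 2 * t), (3 - 2 * t - x) ^ 2
        = (3 - 2 * t) / 3 ∧
    (1 - t) * 1 + t * 0
        - (1 / (3 - 2 * t) ^ 2) * ∫ x in (0 : ℝ)..(3 - 2 * t), (3 - 2 * t - x) ^ 2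
        = -t / 3 ∧
    (1 - t) * 1 + t * 0
        - (1 / (3 - 2 * t) ^ 2) * ∫ x in (0 : ℝ)..(3 - 2 * t), (3 - 2 * t - x) ^ 2
        < 0 := by
  set c : ℝ := 3 - 2 * t with hc
  have hcpos : 0 < c := by nlinarith
  have hint : (∫ x in (0 : ℝ)..c, (c - x) ^ 2) = c ^ 3 / 3 := by
    have := intervalIntegral.integral_comp_sub_left (a := (0:ℝ)) (b := c)
      (fun x => x ^ 2) c
    simp only [sub_zero, sub_self] at this
    rw [this, integral_pow]
    norm_num
  have hS : (1 / c ^ 2) * ∫ x in (0 : ℝ)..c, (c - x) ^ 2 = c / 3 := by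
    rw [hint]; field_simp
  refine ⟨hS, ?_, ?_⟩
  · rw [hS]; ring
  · rw [hS]; nlinarith
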